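/- arXiv:1102.4425 — 2 statements merged into one kernel-verified Lean document; each statement's English description precedes it below -/
import Mathlib

section
/- There is a bijection between paths of length m in the slow graph Γ̃ starting at (n1,λ1) and ending at (n2,λ2), and pairs consisting of a path from λ1 to λ2 in Γ and a path from (n1,|λ1|) to (n2,|λ2|) in the Pascal graph; the bijection sends a path in Γ̃ to the strictly increasing sequence of distinct Γ-vertices it visits together with the sequence of levels |λ_i|. -/
/-!
Every `Γ`-edge raises the level, so a slow path spends one contiguous block of time on each
level and cannot move inside a block. It is therefore determined by the `Γ`-vertices it visits,
one per level, together with its level sequence; conversely any `Γ`-path can be run on any lazy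
level schedule with the same endpoints.
-/

open Function

def IsLazy {m : ℕ} (g : Fin (m + 1) → ℕ) : Prop :=
  ∀ j : Fin m, g j.succ = g j.castSucc ∨ g j.succ = g j.castSucc + 1

namespace IsLazy

variable {m : ℕ} {g : Fin (m + 1) → ℕ}

theorem monotone (hg : IsLazy g) : Monotone g :=
  Fin.monotone_iff_le_succ.2 fun j => by rcases hg j with h | h <;> omega

theorem le_zero_add (hg : IsLazy g) (j : Fin (m + 1)) : g j ≤ g 0 + j := by
  induction j using Fin.induction with
  | zero => simp
  | succ j ih =>
    rcases hg j with h | h <;> simp only [h, Fin.val_succ, Fin.val_castSucc] at ih ⊢ <;> omega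

theorem exists_step (hg : IsLazy g) {t : ℕ} (h0 : g 0 ≤ t) (hlast : t < g (Fin.last m)) :
    ∃ j : Fin m, g j.castSucc = t ∧ g j.succ = t + 1 := by
  suffices ∀ i : Fin (m + 1), t < g i →
      ∃ j : Fin m, g j.castSucc = t ∧ g j.succ = t + 1 from this _ hlast
  intro i
  induction i using Fin.induction with
  | zero => omega
  | succ i ih =>
    intro hi
    by_cases hc : t < g i.castSucc
    · exact ih hc
    · exact ⟨i, by rcases hg i with h | h <;> omega⟩

theorem exists_eq (hg : IsLazy g) {t : ℕ} (h0 : g 0 ≤ t) (hlast : t ≤ g (Fin.last m)) :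
    ∃ j, g j = t := by
  rcases hlast.lt_or_eq with hlt | heq
  · obtain ⟨j, hj, -⟩ := hg.exists_step h0 hlt
    exact ⟨_, hj⟩
  · exact ⟨_, heq.symm⟩

end IsLazy

section Paths

variable {V : Type*} {lvl : V → ℕ} {E : V → V → Prop} {m n : ℕ} {x y : V}

def IsGraded (lvl : V → ℕ) (E : V → V → Prop) : Prop :=
  ∀ x y, E x y → lvl y = lvl x + 1

abbrev EdgePath (E : V → V → Prop) (k : ℕ) (x y : V) :=
  {f : Fin (k + 1) → V // f 0 = x ∧ f (Fin.last _) = y ∧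
    ∀ j : Fin k, E (f j.castSucc) (f j.succ)}

abbrev SlowPath (E : V → V → Prop) (m : ℕ) (x y : V) :=
  {F : Fin (m + 1) → V // F 0 = x ∧ F (Fin.last _) = y ∧
    ∀ j : Fin m, F j.succ = F j.castSucc ∨ E (F j.castSucc) (F j.succ)}

/-- A path from `(n, a)` to `(n + m, b)` in the Pascal graph, recorded by its second coordinates. -/
abbrev PascalPath (n m a b : ℕ) :=
  {g : Fin (m + 1) → ℕ // g 0 = a ∧ g (Fin.last _) = b ∧ IsLazy g ∧
    ∀ j : Fin (m + 1), g j ≤ n + j}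

namespace PascalPath

variable {a b : ℕ}

theorem le_apply (g : PascalPath n m a b) (j : Fin (m + 1)) : a ≤ g.1 j := by
  simpa [g.2.1] using g.2.2.2.1.monotone (Fin.zero_le j)

theorem apply_le (g : PascalPath n m a b) (j : Fin (m + 1)) : g.1 j ≤ b := by
  simpa [g.2.2.1] using g.2.2.2.1.monotone (Fin.le_last j)

def offset (g : PascalPath n m a b) (j : Fin (m + 1)) : Fin (b - a + 1) :=
  ⟨g.1 j - a, by have := g.apply_le j; omega⟩

theorem offset_zero (g : PascalPath n m a b) : g.offset 0 = 0 :=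
  Fin.ext (by simp [offset, g.2.1])

theorem offset_last (g : PascalPath n m a b) : g.offset (Fin.last m) = Fin.last (b - a) :=
  Fin.ext (by simp [offset, g.2.2.1])

theorem exists_offset_step (g : PascalPath n m a b) {j : Fin m}
    (h : g.1 j.succ = g.1 j.castSucc + 1) :
    ∃ i : Fin (b - a), g.offset j.castSucc = i.castSucc ∧ g.offset j.succ = i.succ := by
  have := g.le_apply j.castSucc
  have := g.apply_le j.succ
  exact ⟨⟨g.1 j.castSucc - a, by omega⟩, rfl, Fin.ext (by simp [offset, h]; omega)⟩

theorem surjective_offset (g : PascalPath n m a b) : Surjective g.offset := by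
  intro i
  have hab := g.le_apply (Fin.last m)
  rw [g.2.2.1] at hab
  obtain ⟨j, hj⟩ := g.2.2.2.1.exists_eq (t := a + i) (by simp [g.2.1])
    (by simp only [g.2.2.1]; omega)
  exact ⟨j, Fin.ext (by simp [offset, hj])⟩

end PascalPath

namespace EdgePath

theorem lvl_apply (hgrade : IsGraded lvl E) {k : ℕ} (f : EdgePath E k x y) (i : Fin (k + 1)) :
    lvl (f.1 i) = lvl x + i := by
  induction i using Fin.induction with
  | zero => simp [f.2.1]
  | succ i ih => rw [hgrade _ _ (f.2.2.2 i), ih, Fin.val_succ, Fin.val_castSucc, add_assoc]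

def toSlowPath {a b : ℕ} (f : EdgePath E (b - a) x y) (g : PascalPath n m a b) :
    SlowPath E m x y :=
  ⟨f.1 ∘ g.offset, (congrArg f.1 g.offset_zero).trans f.2.1,
    (congrArg f.1 g.offset_last).trans f.2.2.1, fun j => by
      rcases g.2.2.2.1 j with h | h
      · exact .inl (congrArg f.1 (Fin.ext (by simp [PascalPath.offset, h])))
      · obtain ⟨i, hcs, hs⟩ := g.exists_offset_step h
        exact .inr (by simpa only [comp_apply, hcs, hs] using f.2.2.2 i)⟩

theorem lvl_toSlowPath (hgrade : IsGraded lvl E) (f : EdgePath E (lvl y - lvl x) x y)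
    (g : PascalPath n m (lvl x) (lvl y)) (j : Fin (m + 1)) :
    lvl ((f.toSlowPath g).1 j) = g.1 j := by
  have := g.le_apply j
  simp only [toSlowPath, comp_apply, f.lvl_apply hgrade, PascalPath.offset]
  omega

end EdgePath

namespace SlowPath

theorem isLazy_lvl (hgrade : IsGraded lvl E) (F : SlowPath E m x y) :
    IsLazy fun j => lvl (F.1 j) :=
  fun j => (F.2.2.2 j).imp (congrArg lvl) (hgrade _ _)

theorem lvl_start_le (hgrade : IsGraded lvl E) (F : SlowPath E m x y) (j : Fin (m + 1)) :
    lvl x ≤ lvl (F.1 j) := by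
  simpa [F.2.1] using (isLazy_lvl hgrade F).monotone (Fin.zero_le j)

theorem lvl_le_end (hgrade : IsGraded lvl E) (F : SlowPath E m x y) (j : Fin (m + 1)) :
    lvl (F.1 j) ≤ lvl y := by
  simpa [F.2.2.1] using (isLazy_lvl hgrade F).monotone (Fin.le_last j)

/-- Between two times at the same level every step is a stay. -/
theorem eq_of_lvl_eq (hgrade : IsGraded lvl E) (F : SlowPath E m x y) {a b : Fin (m + 1)}
    (h : lvl (F.1 a) = lvl (F.1 b)) : F.1 a = F.1 b := by
  wlog hab : a ≤ b generalizing a b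
  · exact (this h.symm (le_of_not_ge hab)).symm
  induction b using Fin.induction with
  | zero => rw [nonpos_iff_eq_zero.1 hab]
  | succ i ih =>
    rcases hab.eq_or_lt with rfl | hlt
    · rfl
    have hai : a ≤ i.castSucc := Fin.le_castSucc_iff.2 hlt
    have hmono := (isLazy_lvl hgrade F).monotone
    have hstay : lvl (F.1 i.castSucc) = lvl (F.1 i.succ) :=
      le_antisymm (hmono (Fin.castSucc_le_succ i)) (h ▸ hmono hai)
    rcases F.2.2.2 i with hs | he
    · rw [hs]
      exact ih (h.trans hstay.symm) hai
    · have := hgrade _ _ he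
      omega

theorem exists_lvl_eq (hgrade : IsGraded lvl E) (F : SlowPath E m x y)
    (i : Fin (lvl y - lvl x + 1)) : ∃ j, lvl (F.1 j) = lvl x + i := by
  have hxy := lvl_start_le hgrade F (Fin.last m)
  rw [F.2.2.1] at hxy
  exact (isLazy_lvl hgrade F).exists_eq (by simp [F.2.1]) (by simp only [F.2.2.1]; omega)

/-- The vertex of `Γ` that `F` visits at level `lvl x + i`. -/
noncomputable def visit (hgrade : IsGraded lvl E) (F : SlowPath E m x y)
    (i : Fin (lvl y - lvl x + 1)) : V :=
  F.1 (exists_lvl_eq hgrade F i).choose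

theorem visit_eq (hgrade : IsGraded lvl E) (F : SlowPath E m x y) {i : Fin (lvl y - lvl x + 1)}
    {j : Fin (m + 1)} (h : lvl (F.1 j) = lvl x + i) : F.visit hgrade i = F.1 j :=
  eq_of_lvl_eq hgrade F ((exists_lvl_eq hgrade F i).choose_spec.trans h.symm)

theorem visit_lvl_sub (hgrade : IsGraded lvl E) (F : SlowPath E m x y) (j : Fin (m + 1)) :
    F.visit hgrade ⟨lvl (F.1 j) - lvl x, by have := lvl_le_end hgrade F j; omega⟩ = F.1 j :=
  F.visit_eq hgrade (by have := lvl_start_le hgrade F j; simp only; omega)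

/-- The level `lvl x + i` is left through a step of `F`, which has to be a `Γ`-edge. -/
theorem visit_edge (hgrade : IsGraded lvl E) (F : SlowPath E m x y) (i : Fin (lvl y - lvl x)) :
    E (F.visit hgrade i.castSucc) (F.visit hgrade i.succ) := by
  have hxy := lvl_start_le hgrade F (Fin.last m)
  rw [F.2.2.1] at hxy
  obtain ⟨j, hj, hj'⟩ := (isLazy_lvl hgrade F).exists_step (t := lvl x + i)
    (by simp [F.2.1]) (by simp only [F.2.2.1]; omega)
  rw [F.visit_eq hgrade (j := j.castSucc) (by simpa using hj),
    F.visit_eq hgrade (j := j.succ) (by simpa [add_assoc] using hj')]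
  refine (F.2.2.2 j).resolve_left fun hs => ?_
  simp only [hs] at hj'
  omega

theorem range_visit (hgrade : IsGraded lvl E) (F : SlowPath E m x y) :
    Set.range (F.visit hgrade) = Set.range F.1 := by
  refine subset_antisymm ?_ fun v ⟨j, hj⟩ => ⟨_, (F.visit_lvl_sub hgrade j).trans hj⟩
  rintro _ ⟨i, rfl⟩
  exact ⟨_, rfl⟩

noncomputable def toEdgePath (hgrade : IsGraded lvl E) (F : SlowPath E m x y) :
    EdgePath E (lvl y - lvl x) x y :=
  ⟨F.visit hgrade, (F.visit_eq hgrade (j := 0) (by simp [F.2.1])).trans F.2.1,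
    (F.visit_eq hgrade (j := Fin.last m) (by
      have := lvl_start_le hgrade F (Fin.last m)
      simp only [F.2.2.1, Fin.val_last] at this ⊢
      omega)).trans F.2.2.1,
    F.visit_edge hgrade⟩

def toPascalPath (hgrade : IsGraded lvl E) (hx : lvl x ≤ n) (F : SlowPath E m x y) :
    PascalPath n m (lvl x) (lvl y) :=
  ⟨fun j => lvl (F.1 j), by simp only [F.2.1], by simp only [F.2.2.1], isLazy_lvl hgrade F,
    fun j => by
      have := (isLazy_lvl hgrade F).le_zero_add j
      simp only [F.2.1] at this
      show lvl (F.1 j) ≤ n + j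
      omega⟩

noncomputable def equivEdgePathProdPascalPath (hgrade : IsGraded lvl E) (hx : lvl x ≤ n) :
    SlowPath E m x y ≃ EdgePath E (lvl y - lvl x) x y × PascalPath n m (lvl x) (lvl y) where
  toFun F := (F.toEdgePath hgrade, F.toPascalPath hgrade hx)
  invFun p := p.1.toSlowPath p.2
  left_inv F := Subtype.ext <| funext fun j => F.visit_lvl_sub hgrade j
  right_inv := by
    rintro ⟨f, g⟩
    have hlvl := EdgePath.lvl_toSlowPath hgrade f g
    refine Prod.ext (Subtype.ext <| funext fun i => ?_) (Subtype.ext <| funext hlvl)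
    obtain ⟨j, rfl⟩ := g.surjective_offset i
    have := g.le_apply j
    refine visit_eq hgrade (f.toSlowPath g) (j := j) ((hlvl j).trans ?_)
    show g.1 j = lvl x + (g.1 j - lvl x)
    omega

end SlowPath

end Paths

theorem slow_graph_paths_equiv_prod_general {V : Type*} (lvl : V → ℕ) (E : V → V → Prop)
    (hgrade : ∀ x y, E x y → lvl y = lvl x + 1)
    (n₁ n₂ : ℕ) (x₁ x₂ : V) (h₁ : lvl x₁ ≤ n₁) :
    ∃ e : {F : Fin (n₂ - n₁ + 1) → V //
            F 0 = x₁ ∧ F (Fin.last _) = x₂ ∧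
            ∀ j : Fin (n₂ - n₁), F j.succ = F j.castSucc ∨ E (F j.castSucc) (F j.succ)} ≃
          {f : Fin (lvl x₂ - lvl x₁ + 1) → V //
            f 0 = x₁ ∧ f (Fin.last _) = x₂ ∧
            ∀ j : Fin (lvl x₂ - lvl x₁), E (f j.castSucc) (f j.succ)} ×
          {g : Fin (n₂ - n₁ + 1) → ℕ //
            g 0 = lvl x₁ ∧ g (Fin.last _) = lvl x₂ ∧
            (∀ j : Fin (n₂ - n₁), g j.succ = g j.castSucc ∨ g j.succ = g j.castSucc + 1) ∧
            (∀ j : Fin (n₂ - n₁ + 1), g j ≤ n₁ + (j : ℕ))},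
      ∀ F, (∀ j : Fin (n₂ - n₁ + 1), ((e F).2 : Fin (n₂ - n₁ + 1) → ℕ) j = lvl (F.1 j)) ∧
        Set.range ((e F).1 : Fin (lvl x₂ - lvl x₁ + 1) → V) = Set.range F.1 := by
  exact ⟨SlowPath.equivEdgePathProdPascalPath hgrade h₁,
    fun F => ⟨fun _ => rfl, SlowPath.range_visit hgrade F⟩⟩

/-- Paths of length `m = n₂ - n₁` in the slow graph `Γ̃` from `(n₁, x₁)` to `(n₂, x₂)`
are in bijection with pairs (path `x₁ → x₂` in `Γ`, path `(n₁, lvl x₁) → (n₂, lvl x₂)`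
in the Pascal graph). The bijection sends a slow path `F` to the strictly increasing
sequence of distinct `Γ`-vertices it visits (so the `Γ`-path has the same set of
visited vertices as `F`) together with its sequence of levels `j ↦ lvl (F j)`. -/
theorem slow_graph_paths_equiv_prod {V : Type*} (lvl : V → ℕ) (E : V → V → Prop)
    (hgrade : ∀ x y, E x y → lvl y = lvl x + 1)
    (n₁ n₂ : ℕ) (x₁ x₂ : V) (hn : n₁ ≤ n₂) (h₁ : lvl x₁ ≤ n₁) (h₂ : lvl x₂ ≤ n₂) :
    ∃ e : {F : Fin (n₂ - n₁ + 1) → V //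
            F 0 = x₁ ∧ F (Fin.last _) = x₂ ∧
            ∀ j : Fin (n₂ - n₁), F j.succ = F j.castSucc ∨ E (F j.castSucc) (F j.succ)} ≃
          {f : Fin (lvl x₂ - lvl x₁ + 1) → V //
            f 0 = x₁ ∧ f (Fin.last _) = x₂ ∧
            ∀ j : Fin (lvl x₂ - lvl x₁), E (f j.castSucc) (f j.succ)} ×
          {g : Fin (n₂ - n₁ + 1) → ℕ //
            g 0 = lvl x₁ ∧ g (Fin.last _) = lvl x₂ ∧
            (∀ j : Fin (n₂ - n₁), g j.succ = g j.castSucc ∨ g j.succ = g j.castSucc + 1) ∧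
            (∀ j : Fin (n₂ - n₁ + 1), g j ≤ n₁ + (j : ℕ))},
      ∀ F, (∀ j : Fin (n₂ - n₁ + 1), ((e F).2 : Fin (n₂ - n₁ + 1) → ℕ) j = lvl (F.1 j)) ∧
        Set.range ((e F).1 : Fin (lvl x₂ - lvl x₁ + 1) → V) = Set.range F.1 :=
  slow_graph_paths_equiv_prod_general lvl E hgrade n₁ n₂ x₁ x₂ h₁
end

section
/- Let σ ∈ R_n be a partial bijection and χ a class function on S_r. Define χ*(σ) = Σ_K χ(μ_K σ μ_K^{-}), summed over r-element subsets K of the domain of σ with σ(K) = K, where μ_K : K → {1,...,r} is any fixed bijection and μ_K^{-} its inverse. Then χ*(σ) does not depend on the choice of the bijections μ_K, and χ* is invariant under conjugation of σ by elements of S_n. -/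
/-!
Conjugation by `g` maps the `σ`-invariant `r`-subsets `K` bijectively onto the `σ'`-invariant
ones via `K ↦ g K`, and `g` restricts to a bijection `K ≃ g K` intertwining the restrictions of
`σ` and `σ'`. So the permutations of `Fin r` read off from `K` and from `g K` are both transports
of one permutation of `K`, hence conjugate, and `χ` takes the same value on them. The case
`g = 1` is the independence of the bijections `μ_K`.
-/

theorem Equiv.isConj_permCongr {α β : Type*} (e₁ e₂ : α ≃ β) (p : Equiv.Perm α) :
    IsConj (e₁.permCongr p) (e₂.permCongr p) :=
  isConj_iff.mpr ⟨e₁.symm.trans e₂, Equiv.ext fun y => by simp [Equiv.Perm.mul_apply]⟩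

namespace PEquiv

variable {α β : Type*}

def conj (g : α ≃ β) (σ : PEquiv α α) : PEquiv β β :=
  (g.symm.toPEquiv.trans σ).trans g.toPEquiv

@[simp]
theorem conj_apply_apply (g : α ≃ β) (σ : PEquiv α α) (x : α) :
    conj g σ (g x) = (σ x).map g := by
  change ((g.symm.toPEquiv (g x)).bind σ).bind g.toPEquiv = _
  rw [Equiv.toPEquiv_apply, Equiv.symm_apply_apply, Option.bind_some]
  cases σ x <;> simp [Equiv.toPEquiv_apply]

def IsInvariant (σ : PEquiv α α) (K : Finset α) : Prop :=
  ∀ i ∈ K, ∃ j ∈ K, σ i = some j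

theorem isInvariant_conj_map_iff (g : α ≃ β) (σ : PEquiv α α) (K : Finset α) :
    (conj g σ).IsInvariant (K.map g.toEmbedding) ↔ σ.IsInvariant K := by
  simp only [IsInvariant, Finset.mem_map, exists_exists_and_eq_and]
  simp

theorem isConj_restrict_conj {γ : Type*} (g : α ≃ β) (σ : PEquiv α α) (K : Finset α)
    (e : K ≃ γ) (e' : K.map g.toEmbedding ≃ γ) (τ τ' : Equiv.Perm γ)
    (hτ : ∀ x : K, σ x = some (e.symm (τ (e x))))
    (hτ' : ∀ y : K.map g.toEmbedding, conj g σ y = some (e'.symm (τ' (e' y)))) :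
    IsConj τ τ' := by
  let φ : K ≃ K.map g.toEmbedding :=
    g.subtypeEquiv fun a => (Finset.mem_map' g.toEmbedding).symm
  -- the restriction of `σ` to `K`
  set ρ := e.symm.permCongr τ
  have hρ : e'.symm.permCongr τ' = φ.permCongr ρ := by
    refine Equiv.ext <| φ.surjective.forall.mpr fun x =>
      Subtype.ext <| Option.some_injective _ ?_
    calc some (e'.symm.permCongr τ' (φ x) : β) = conj g σ (g x) := (hτ' (φ x)).symm
      _ = some (g (ρ x)) := by rw [conj_apply_apply, hτ x]; rfl
      _ = some (φ.permCongr ρ (φ x) : β) := by simp [φ]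
  have hτρ : τ = e.permCongr ρ := by ext; simp [ρ]
  have hτ'ρ : τ' = (φ.trans e').permCongr ρ := by
    ext y
    simpa using congrArg e' (Equiv.congr_fun hρ (e'.symm y))
  rw [hτρ, hτ'ρ]
  exact Equiv.isConj_permCongr _ _ ρ

end PEquiv

open scoped Classical in
/-- Let `σ ∈ R_n` and `χ` a class function on `S_r`. Put
`χ*(σ) = ∑_K χ(μ_K σ μ_K⁻)`, the sum over `r`-element subsets `K` of the domain of `σ`
with `σ(K) = K`, where `μ_K : K ≃ Fin r` is any bijection and `μ_K σ μ_K⁻ ∈ S_r` is the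
conjugated restriction of `σ` (encoded by: `τ K` represents it iff
`σ x = μ_K⁻ (τ K (μ_K x))` for all `x ∈ K`). Then `χ*(σ)` is independent of the choice
of the bijections `μ_K`, and is invariant under conjugation of `σ` by any `g ∈ S_n`
(independence is the case `g = 1`). -/
theorem chi_star_well_defined_and_conjugation_invariant (n r : ℕ)
    (χ : Equiv.Perm (Fin r) → ℂ)
    (hχ : ∀ g h : Equiv.Perm (Fin r), χ (g * h * g⁻¹) = χ h)
    (σ σ' : PEquiv (Fin n) (Fin n)) (g : Equiv.Perm (Fin n))
    (hσ' : σ' = (g⁻¹.toPEquiv.trans σ).trans g.toPEquiv)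
    (e e' : ∀ K : Finset (Fin n), {x // x ∈ K} ≃ Fin r)
    (τ τ' : Finset (Fin n) → Equiv.Perm (Fin r))
    (hτ : ∀ K : Finset (Fin n), (K.card = r ∧ ∀ i ∈ K, ∃ j ∈ K, σ i = some j) →
      ∀ x : {y // y ∈ K}, σ x.1 = some ((e K).symm (τ K ((e K) x))).1)
    (hτ' : ∀ K : Finset (Fin n), (K.card = r ∧ ∀ i ∈ K, ∃ j ∈ K, σ' i = some j) →
      ∀ x : {y // y ∈ K}, σ' x.1 = some ((e' K).symm (τ' K ((e' K) x))).1) :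
    ∑ K ∈ Finset.univ.powerset.filter
        (fun K : Finset (Fin n) => K.card = r ∧ ∀ i ∈ K, ∃ j ∈ K, σ i = some j),
        χ (τ K) =
      ∑ K ∈ Finset.univ.powerset.filter
        (fun K : Finset (Fin n) => K.card = r ∧ ∀ i ∈ K, ∃ j ∈ K, σ' i = some j),
        χ (τ' K) := by
  obtain rfl : σ' = PEquiv.conj g σ := hσ'
  refine Finset.sum_equiv g.finsetCongr (fun K => ?_) (fun K hK => ?_)
  · simp only [Finset.mem_filter, Finset.mem_powerset, Finset.subset_univ, true_and,
      Equiv.finsetCongr_apply, Finset.card_map]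
    exact and_congr_right' (PEquiv.isInvariant_conj_map_iff g σ K).symm
  · obtain ⟨hcard, hK⟩ := (Finset.mem_filter.mp hK).2
    have hK' : (K.map g.toEmbedding).card = r ∧
        (PEquiv.conj g σ).IsInvariant (K.map g.toEmbedding) :=
      ⟨by rw [Finset.card_map, hcard], (PEquiv.isInvariant_conj_map_iff g σ K).mpr hK⟩
    obtain ⟨c, hc⟩ := isConj_iff.mp <| PEquiv.isConj_restrict_conj g σ K (e K) (e' _) (τ K) (τ' _)
      (hτ K ⟨hcard, hK⟩) (hτ' _ hK')
    rw [Equiv.finsetCongr_apply, ← hc, hχ]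
end
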